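/- The twisted mixed commutator formula: with T a twist such that right creation operators are well defined, for ξ, η ∈ H and Ψ_n ∈ H^{⊗n} one has [a_{L,T}(ξ), a*_{R,T}(η)][Ψ_n] = [a_L(ξ) T_1⋯T_n (Ψ_n ⊗ η)], using R_{T,n+1} = R_{T,n}⊗1 + T_1⋯T_n. -/

import Mathlib

/-!
STATEMENT 9: Twisted mixed commutator formula: for a twist `T`, `ξ, η ∈ H` and
`Ψ_n ∈ H^{⊗n}`,
`[a_{L,T}(ξ), a*_{R,T}(η)][Ψ_n] = [a_L(ξ) T₁⋯T_n (Ψ_n ⊗ η)]`,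
which follows from `R_{T,n+1} = R_{T,n} ⊗ 1 + T₁⋯T_n`.

The `n`-particle spaces are realized as iterated algebraic tensor products,
with `a*_{R,T}(η)Ψ = Ψ ⊗ η` and `a_{L,T}(ξ)Ψ = a_L(ξ) R_{T,n} Ψ`.  The stated
identity is formalized at the level of representatives in `H^{⊗n}` (it holds
there exactly, and the bracketed identity between classes modulo
`ker P_{T,n}` follows by applying the quotient map `[·]` to both sides).
The commutator on the vacuum, `[a_{L,T}(ξ), a*_{R,T}(η)]Ω = ⟨ξ,η⟩Ω`, is the
second clause.
-/

noncomputable section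
open TensorProduct

variable (H : Type) [AddCommGroup H] [Module ℂ H]

/-- bundled algebraic tensor power `H^{⊗n}`, right-nested
(`Tpow H 0 = ℂ`, `Tpow H (n+1) = H ⊗ Tpow H n`). -/
def TpowData : ℕ → ModuleCat ℂ
  | 0 => ModuleCat.of ℂ ℂ
  | n + 1 => ModuleCat.of ℂ (H ⊗[ℂ] (TpowData n))

/-- the tensor power `H^{⊗n}`. -/
abbrev Tpow (n : ℕ) : Type := (TpowData H n : Type)

variable {H}

/-- `T_1` acting on the first two factors of `H^{⊗(n+2)}`. -/
def opT1 (T : H ⊗[ℂ] H →ₗ[ℂ] H ⊗[ℂ] H) (n : ℕ) :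
    Tpow H (n + 2) →ₗ[ℂ] Tpow H (n + 2) :=
  (TensorProduct.assoc ℂ H H (Tpow H n)).toLinearMap ∘ₗ
    (TensorProduct.map T LinearMap.id) ∘ₗ
      (TensorProduct.assoc ℂ H H (Tpow H n)).symm.toLinearMap

/-- `T_k = 1^{⊗(k-1)} ⊗ T ⊗ 1^{⊗(n-k-1)}` on `H^{⊗n}`
(the identity for `k` out of the range `1 ≤ k ≤ n-1`). -/
def opTk (T : H ⊗[ℂ] H →ₗ[ℂ] H ⊗[ℂ] H) : (n : ℕ) → (k : ℕ) → (Tpow H n →ₗ[ℂ] Tpow H n)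
  | n + 2, 1 => opT1 T n
  | n + 2, k + 2 => TensorProduct.map LinearMap.id (opTk T (n + 1) (k + 1))
  | _, _ => LinearMap.id

/-- `R_{T,n} = 1 + T_1 + T_1T_2 + ⋯ + T_1⋯T_{n-1}` on `H^{⊗n}`. -/
def RopAlg (T : H ⊗[ℂ] H →ₗ[ℂ] H ⊗[ℂ] H) (n : ℕ) : Tpow H n →ₗ[ℂ] Tpow H n :=
  ∑ j ∈ Finset.range n, ((List.range j).map fun i => opTk T n (i + 1)).prod

/-- `P_{T,n}`: `P_{T,0} = P_{T,1} = 1`, `P_{T,n+1} = (1 ⊗ P_{T,n}) R_{T,n+1}`. -/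
def PopAlg (T : H ⊗[ℂ] H →ₗ[ℂ] H ⊗[ℂ] H) : (n : ℕ) → (Tpow H n →ₗ[ℂ] Tpow H n)
  | 0 => LinearMap.id
  | n + 1 =>
    (show Tpow H (n + 1) →ₗ[ℂ] Tpow H (n + 1) from
        TensorProduct.map LinearMap.id (PopAlg T n)) ∘ₗ RopAlg T (n + 1)

/-- the canonical isomorphism `H^{⊗n} ⊗ H ≅ H^{⊗(n+1)}`. -/
def snocEquiv : (n : ℕ) → ((Tpow H n) ⊗[ℂ] H ≃ₗ[ℂ] Tpow H (n + 1))
  | 0 => (TensorProduct.lid ℂ H).trans (TensorProduct.rid ℂ H).symm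
  | n + 1 =>
    (TensorProduct.assoc ℂ H (Tpow H n) H).trans
      (TensorProduct.congr (LinearEquiv.refl ℂ H) (snocEquiv n))

section Fock
variable {E : Type} [NormedAddCommGroup E] [InnerProductSpace ℂ E]

/-- untwisted left annihilation `a_L(ξ)`. -/
def annL (ξ : E) (n : ℕ) : Tpow E (n + 1) →ₗ[ℂ] Tpow E n :=
  (TensorProduct.lid ℂ (Tpow E n)).toLinearMap ∘ₗ
    (TensorProduct.map ((innerSL ℂ ξ : E →L[ℂ] ℂ) : E →ₗ[ℂ] ℂ) LinearMap.id)

/-- right creation `a*_{R}(η) : Ψ ↦ Ψ ⊗ η`. -/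
def creR (η : E) (n : ℕ) : Tpow E n →ₗ[ℂ] Tpow E (n + 1) :=
  (snocEquiv n).toLinearMap ∘ₗ ((TensorProduct.mk ℂ (Tpow E n) E).flip η)

/-- the product `T₁ T₂ ⋯ T_m` on `H^{⊗n}`. -/
def prodTk (T : E ⊗[ℂ] E →ₗ[ℂ] E ⊗[ℂ] E) (n m : ℕ) : Tpow E n →ₗ[ℂ] Tpow E n :=
  ((List.range m).map fun i => opTk T n (i + 1)).prod

/-
Right creation appends a factor at the far end of the tensor, while `a_L(ξ)` and `T₁, …, T_n`
only touch the first `n + 1` factors of `H^{⊗(n+2)}`; hence all of them commute with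
`a*_R(η)`. In the sum `R_{T,n+2} = ∑_{j ≤ n+1} T₁⋯T_j` every term but the last therefore
passes through `a*_R(η)`, which is `R_{T,n+2} a*_R(η) = a*_R(η) R_{T,n+1} + T₁⋯T_{n+1} a*_R(η)`,
and applying `a_L(ξ)` gives the commutator formula.
-/

lemma opT1_comp_map_id_map_id (T : H ⊗[ℂ] H →ₗ[ℂ] H ⊗[ℂ] H) {n m : ℕ}
    (f : Tpow H n →ₗ[ℂ] Tpow H m) :
    opT1 T m ∘ₗ TensorProduct.map LinearMap.id (TensorProduct.map LinearMap.id f) =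
      TensorProduct.map LinearMap.id (TensorProduct.map LinearMap.id f) ∘ₗ opT1 T n := by
  refine TensorProduct.ext_threefold' fun x y z => ?_
  show TensorProduct.assoc ℂ H H (Tpow H m) (T (x ⊗ₜ y) ⊗ₜ f z) =
    TensorProduct.map LinearMap.id (TensorProduct.map LinearMap.id f)
      (TensorProduct.assoc ℂ H H (Tpow H n) (T (x ⊗ₜ y) ⊗ₜ z))
  rw [TensorProduct.map_map_assoc, TensorProduct.map_tmul, TensorProduct.map_id,
    LinearMap.id_apply]

lemma creR_succ (η : E) (n : ℕ) :
    creR η (n + 1) = TensorProduct.map LinearMap.id (creR η n) :=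
  TensorProduct.ext' fun _ _ => rfl

lemma annL_comp_creR (ξ η : E) (n : ℕ) :
    annL ξ (n + 1) ∘ₗ creR η (n + 1) = creR η n ∘ₗ annL ξ n := by
  rw [creR_succ]
  refine TensorProduct.ext' fun x y => ?_
  exact (map_smul (creR η n) (inner ℂ ξ x) y).symm

lemma annL_creR_zero (ξ η : E) (c : Tpow E 0) :
    annL ξ 0 (creR η 0 c) = (inner ℂ ξ η : ℂ) • c := by
  show (inner ℂ ξ ((show ℂ from c) • η) : ℂ) • (1 : ℂ) = (inner ℂ ξ η : ℂ) • (show ℂ from c)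
  rw [inner_smul_right, smul_eq_mul, smul_eq_mul, mul_one, mul_comm]

lemma opTk_comp_creR (T : E ⊗[ℂ] E →ₗ[ℂ] E ⊗[ℂ] E) (η : E) {n k : ℕ} (hk : k ≤ n) :
    opTk T (n + 2) k ∘ₗ creR η (n + 1) = creR η (n + 1) ∘ₗ opTk T (n + 1) k := by
  induction n generalizing k with
  | zero =>
    obtain rfl : k = 0 := by omega
    rfl
  | succ n ih =>
    match k, hk with
    | 0, _ => rfl
    | 1, _ => rw [creR_succ, creR_succ]; exact opT1_comp_map_id_map_id T (creR η n)
    | j + 2, hj =>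
      rw [creR_succ]
      erw [← TensorProduct.map_comp, ← TensorProduct.map_comp, ih (by omega)]

lemma prodTk_comp_creR (T : E ⊗[ℂ] E →ₗ[ℂ] E ⊗[ℂ] E) (η : E) {n m : ℕ} (hm : m ≤ n) :
    prodTk T (n + 2) m ∘ₗ creR η (n + 1) = creR η (n + 1) ∘ₗ prodTk T (n + 1) m := by
  induction m with
  | zero => rfl
  | succ m ih =>
    simp only [prodTk, List.range_succ, List.map_append, List.prod_append, List.map_singleton,
      List.prod_singleton, Module.End.mul_eq_comp] at ih ⊢
    rw [LinearMap.comp_assoc, opTk_comp_creR T η hm, ← LinearMap.comp_assoc, ih (by omega),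
      LinearMap.comp_assoc]

lemma RopAlg_eq_sum_prodTk (T : E ⊗[ℂ] E →ₗ[ℂ] E ⊗[ℂ] E) (n : ℕ) :
    RopAlg T n = ∑ j ∈ Finset.range n, prodTk T n j :=
  rfl

lemma RopAlg_one (T : H ⊗[ℂ] H →ₗ[ℂ] H ⊗[ℂ] H) : RopAlg T 1 = LinearMap.id := by
  simp [RopAlg, Module.End.one_eq_id]

lemma RopAlg_succ_comp_creR (T : E ⊗[ℂ] E →ₗ[ℂ] E ⊗[ℂ] E) (η : E) (n : ℕ) :
    RopAlg T (n + 2) ∘ₗ creR η (n + 1) =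
      creR η (n + 1) ∘ₗ RopAlg T (n + 1) + prodTk T (n + 2) (n + 1) ∘ₗ creR η (n + 1) := by
  rw [RopAlg_eq_sum_prodTk, Finset.sum_range_succ, LinearMap.add_comp, RopAlg_eq_sum_prodTk]
  congr 1
  ext Ψ
  simp only [LinearMap.comp_apply, LinearMap.coe_sum, Finset.sum_apply, map_sum]
  exact Finset.sum_congr rfl fun j hj => LinearMap.congr_fun
    (prodTk_comp_creR T η (Nat.lt_succ_iff.mp (Finset.mem_range.mp hj))) Ψ

/-- The twisted mixed commutator formula
`[a_{L,T}(ξ), a*_{R,T}(η)] Ψ_n = a_L(ξ) T₁⋯T_n (Ψ_n ⊗ η)`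
(on representatives in `H^{⊗n}`, `n ≥ 1`), together with
`[a_{L,T}(ξ), a*_{R,T}(η)] Ω = ⟨ξ,η⟩ Ω` on the vacuum. -/
theorem twisted_mixed_commutator
    (T : E ⊗[ℂ] E →ₗ[ℂ] E ⊗[ℂ] E) (ξ η : E) :
    (∀ n (Ψ : Tpow E (n + 1)),
      annL ξ (n + 1) (RopAlg T (n + 2) (creR η (n + 1) Ψ))
          - creR η n (annL ξ n (RopAlg T (n + 1) Ψ))
        = annL ξ (n + 1) (prodTk T (n + 2) (n + 1) (creR η (n + 1) Ψ))) ∧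
    (∀ c : Tpow E 0,
      annL ξ 0 (RopAlg T 1 (creR η 0 c)) = (inner ℂ ξ η : ℂ) • c) := by
  refine ⟨fun n Ψ => ?_, fun c => ?_⟩
  · have hR := LinearMap.congr_fun (RopAlg_succ_comp_creR T η n) Ψ
    have hswap := LinearMap.congr_fun (annL_comp_creR ξ η n) (RopAlg T (n + 1) Ψ)
    simp only [LinearMap.comp_apply, LinearMap.add_apply] at hR hswap
    rw [hR, map_add, hswap, add_sub_cancel_left]
  · rw [RopAlg_one, LinearMap.id_apply, annL_creR_zero]

end Fock
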